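/- For every real number d with √2 ≤ d ≤ 2, the lattice L_d can be covered by closed unit disks with pairwise disjoint interiors. -/

import Mathlib

/-- The square lattice `(dℤ) × (dℤ)` in the Euclidean plane. -/
def squareLattice (d : ℝ) : Set (EuclideanSpace ℝ (Fin 2)) :=
  {p | ∃ m n : ℤ, p 0 = d * m ∧ p 1 = d * n}

/-- A set `S ⊆ ℝ²` is coverable by closed unit disks with pairwise disjoint interiors:
there is a family of centers with pairwise distances at least `2` such that `S` is
contained in the union of the closed unit balls about the centers. -/
def CoverableByUnitDisks (S : Set (EuclideanSpace ℝ (Fin 2))) : Prop :=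
  ∃ (ι : Type) (c : ι → EuclideanSpace ℝ (Fin 2)),
    (∀ i j, i ≠ j → 2 ≤ dist (c i) (c j)) ∧
    S ⊆ ⋃ i, Metric.closedBall (c i) 1

/-!
Colour `L_d` like a checkerboard: the black points `d • (a + b, a - b)` form a square lattice of
side `√2 · d ≥ 2`, rotated by 45°. Centre a disk halfway between each black point and its right
neighbour. Distinct centres are then at distance at least `√2 · d ≥ 2`, and every point of `L_d`
lies at distance `d / 2 ≤ 1` from a centre.
-/

theorem EuclideanSpace.dist_sq_eq_fin_two (x y : EuclideanSpace ℝ (Fin 2)) :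
    dist x y ^ 2 = (x 0 - y 0) ^ 2 + (x 1 - y 1) ^ 2 := by
  simp [EuclideanSpace.dist_sq_eq, Fin.sum_univ_two, Real.dist_eq, sq_abs]

theorem Int.one_le_sq_add_sq {x y : ℤ} (h : x ≠ 0 ∨ y ≠ 0) : 1 ≤ x ^ 2 + y ^ 2 := by
  rcases h with h | h
  · nlinarith [(one_le_sq_iff_one_le_abs x).2 (Int.one_le_abs h), sq_nonneg y]
  · nlinarith [(one_le_sq_iff_one_le_abs y).2 (Int.one_le_abs h), sq_nonneg x]

noncomputable def checkerCenter (d : ℝ) (p : ℤ × ℤ) : EuclideanSpace ℝ (Fin 2) :=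
  !₂[d * (p.1 + p.2) + d / 2, d * (p.1 - p.2)]

theorem dist_checkerCenter_sq (d : ℝ) (p q : ℤ × ℤ) :
    dist (checkerCenter d p) (checkerCenter d q) ^ 2 =
      2 * d ^ 2 * (((p.1 - q.1 : ℤ) : ℝ) ^ 2 + ((p.2 - q.2 : ℤ) : ℝ) ^ 2) := by
  rw [EuclideanSpace.dist_sq_eq_fin_two]
  simp only [checkerCenter, Matrix.cons_val_zero, Matrix.cons_val_one, Matrix.cons_val_fin_one,
    Int.cast_sub]
  ring

theorem sqrt_two_mul_abs_le_dist_checkerCenter (d : ℝ) {p q : ℤ × ℤ} (hpq : p ≠ q) :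
    √2 * |d| ≤ dist (checkerCenter d p) (checkerCenter d q) := by
  have hpq' : p.1 - q.1 ≠ 0 ∨ p.2 - q.2 ≠ 0 := by
    contrapose! hpq
    exact Prod.ext (by omega) (by omega)
  have hsum : (1 : ℝ) ≤ ((p.1 - q.1 : ℤ) : ℝ) ^ 2 + ((p.2 - q.2 : ℤ) : ℝ) ^ 2 := by
    exact_mod_cast Int.one_le_sq_add_sq hpq'
  rw [← pow_le_pow_iff_left₀ (by positivity) dist_nonneg two_ne_zero, dist_checkerCenter_sq,
    mul_pow, Real.sq_sqrt zero_le_two, sq_abs]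
  nlinarith [sq_nonneg d]

theorem exists_dist_checkerCenter_eq (d : ℝ) (k n : ℤ) :
    ∃ p, dist !₂[d * k, d * n] (checkerCenter d p) = |d| / 2 := by
  obtain ⟨a, ha⟩ | ⟨a, ha⟩ := Int.even_or_odd (k + n) <;> refine ⟨(a, a - n), ?_⟩ <;>
    rw [← sq_eq_sq₀ dist_nonneg (by positivity), EuclideanSpace.dist_sq_eq_fin_two,
      div_pow, sq_abs]
  · have hk : (k : ℝ) = a + a - n := by exact_mod_cast (by omega : k = a + a - n)
    simp only [checkerCenter, hk, Matrix.cons_val_zero, Matrix.cons_val_one,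
      Matrix.cons_val_fin_one, Int.cast_sub]
    ring
  · have hk : (k : ℝ) = 2 * a + 1 - n := by exact_mod_cast (by omega : k = 2 * a + 1 - n)
    simp only [checkerCenter, hk, Matrix.cons_val_zero, Matrix.cons_val_one,
      Matrix.cons_val_fin_one, Int.cast_sub]
    ring

theorem squareLattice_subset_iUnion_closedBall_checkerCenter (d : ℝ) :
    squareLattice d ⊆ ⋃ p, Metric.closedBall (checkerCenter d p) (|d| / 2) := by
  rintro x ⟨k, n, hk, hn⟩
  obtain ⟨p, hp⟩ := exists_dist_checkerCenter_eq d k n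
  have hx : x = !₂[d * k, d * n] := by
    ext i; fin_cases i <;> simp [hk, hn]
  exact Set.mem_iUnion.2 ⟨p, hx ▸ hp.le⟩

theorem lattice_coverable_interval7 (d : ℝ)
    (hd : d ∈ Set.Icc (Real.sqrt 2) 2) :
    CoverableByUnitDisks (squareLattice d) := by
  obtain ⟨hd_low, hd_high⟩ := hd
  have habs : |d| = d := abs_of_nonneg ((Real.sqrt_nonneg 2).trans hd_low)
  refine ⟨ℤ × ℤ, checkerCenter d, fun p q hpq => ?_, ?_⟩
  · calc (2 : ℝ) = √2 * √2 := (Real.mul_self_sqrt zero_le_two).symm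
      _ ≤ √2 * |d| := by rw [habs]; gcongr
      _ ≤ _ := sqrt_two_mul_abs_le_dist_checkerCenter d hpq
  · refine (squareLattice_subset_iUnion_closedBall_checkerCenter d).trans
      (Set.iUnion_mono fun p => Metric.closedBall_subset_closedBall ?_)
    rw [habs]; linarith
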